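/- arXiv:1403.6996 — 4 statements merged into one kernel-verified Lean document; each statement's English description precedes it below -/
import Mathlib

section
/- Let f : ℝ → ℝ be twice continuously differentiable near a simple root α with f'(α) ≠ 0 and f'(α) ≠ -1. Then Steffensen's method x_{n+1} = x_n - f(x_n)²/(f(x_n + f(x_n)) - f(x_n)) converges quadratically to α for initial points sufficiently close to α. -/
/-!
Write `e = x - α`, `a = f'(α)` and `D = f (x + f x) - f x`. Since `f` is `C²`, the remainder
`f y - f x - a (y - x)` is `O(max(|x - α|, |y - α|) · |y - x|)` near `(α, α)`; taking `(α, x)` and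
`(x, x + f x)` gives `f x = a e + O(e²)` and `D = a f x + O(e²) = a² e + O(e²)`. In the error
`x - f x² / D - α = (e D - f x²) / D` the numerator is `e (D - a f x) - f x (f x - a e) = O(e³)`,
while `a ≠ 0` makes `|D| ≍ |e|`, so one step squares the error up to a constant. Near `α` this
halves the error, so the iterates stay close and converge.
-/

open Filter Metric Topology Asymptotics

section
variable {E F : Type*} [NormedAddCommGroup E] [NormedSpace ℝ E]
  [NormedAddCommGroup F] [NormedSpace ℝ F]

theorem ContDiffAt.isBigO_sub_sub_fderiv {f : E → F} {x : E} (hf : ContDiffAt ℝ 2 f x) :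
    (fun p : E × E => f p.2 - f p.1 - fderiv ℝ f x (p.2 - p.1)) =O[𝓝 (x, x)]
      fun p => ‖p - (x, x)‖ * ‖p.2 - p.1‖ := by
  obtain ⟨K, t, ht, hK⟩ := (hf.fderiv_right (m := 1) (by norm_num)).exists_lipschitzOnWith
  have hdiff : ∀ᶠ y in 𝓝 x, DifferentiableAt ℝ f y :=
    (hf.eventually (by simp)).mono fun y hy => hy.differentiableAt (by norm_num)
  obtain ⟨r, hr, hball⟩ := nhds_basis_closedBall.mem_iff.1 (inter_mem ht hdiff)
  refine IsBigO.of_bound K ?_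
  filter_upwards [closedBall_mem_nhds (x, x) hr] with p hp
  set m := ‖p - (x, x)‖
  have hm : closedBall x m ⊆ closedBall x r :=
    closedBall_subset_closedBall (mem_closedBall_iff_norm.1 hp)
  have hp₁ : p.1 ∈ closedBall x m := mem_closedBall_iff_norm.2 (norm_fst_le (p - (x, x)))
  have hp₂ : p.2 ∈ closedBall x m := mem_closedBall_iff_norm.2 (norm_snd_le (p - (x, x)))
  have bound : ∀ y ∈ closedBall x m, ‖fderiv ℝ f y - fderiv ℝ f x‖ ≤ K * m := fun y hy =>
    calc ‖fderiv ℝ f y - fderiv ℝ f x‖ ≤ K * ‖y - x‖ :=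
          hK.norm_sub_le (hball (hm hy)).1 (hball (mem_closedBall_self hr.le)).1
      _ ≤ K * m := by gcongr; exact mem_closedBall_iff_norm.1 hy
  rw [norm_mul, norm_norm, norm_norm, ← mul_assoc]
  exact (convex_closedBall x m).norm_image_sub_le_of_norm_fderiv_le'
    (fun y hy => (hball (hm hy)).2) bound hp₁ hp₂

end

theorem exists_dist_iterate_le_sq_and_tendsto {X : Type*} [PseudoMetricSpace X] {g : X → X}
    {α : X} {C : ℝ} (hC : 0 ≤ C) (h : ∀ᶠ x in 𝓝 α, dist (g x) α ≤ C * dist x α ^ 2) :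
    ∃ δ > 0, ∀ x₀, dist x₀ α < δ →
      (∀ n, dist (g^[n + 1] x₀) α ≤ C * dist (g^[n] x₀) α ^ 2) ∧
        Tendsto (fun n => g^[n] x₀) atTop (𝓝 α) := by
  obtain ⟨ε, hε, hε_bound⟩ := Metric.eventually_nhds_iff.1 h
  obtain ⟨η, hη, hCη⟩ := exists_pos_mul_lt one_half_pos C
  set δ := min ε η
  refine ⟨δ, lt_min hε hη, fun x₀ hx₀ => ?_⟩
  have hhalf : ∀ x, dist x α < δ → dist (g x) α ≤ 2⁻¹ * dist x α := fun x hx =>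
    calc dist (g x) α ≤ C * dist x α * dist x α := by
          rw [mul_assoc, ← sq]; exact hε_bound (hx.trans_le (min_le_left _ _))
      _ ≤ C * η * dist x α := by gcongr; exact (hx.trans_le (min_le_right _ _)).le
      _ ≤ 2⁻¹ * dist x α := by gcongr; linarith
  have hgeom : ∀ n, dist (g^[n] x₀) α ≤ 2⁻¹ ^ n * dist x₀ α ∧ dist (g^[n] x₀) α < δ := by
    intro n
    induction n with
    | zero => simpa using hx₀
    | succ n ih =>
      rw [Function.iterate_succ_apply', pow_succ', mul_assoc]
      have hle := hhalf _ ih.2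
      exact ⟨hle.trans (by gcongr; exact ih.1),
        hle.trans_lt ((mul_le_of_le_one_left dist_nonneg (by norm_num)).trans_lt ih.2)⟩
  refine ⟨fun n => ?_, ?_⟩
  · rw [Function.iterate_succ_apply']
    exact hε_bound ((hgeom n).2.trans_le (min_le_left _ _))
  · refine tendsto_iff_dist_tendsto_zero.2 (squeeze_zero (fun _ => dist_nonneg)
      (fun n => (hgeom n).1) ?_)
    simpa using (tendsto_pow_atTop_nhds_zero_of_lt_one (by norm_num : (0 : ℝ) ≤ 2⁻¹)
      (by norm_num)).mul_const (dist x₀ α)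

noncomputable def steffensenStep (f : ℝ → ℝ) (x : ℝ) : ℝ := x - f x ^ 2 / (f (x + f x) - f x)

theorem isLittleO_sub_sq (α : ℝ) : (fun x => (x - α) ^ 2) =o[𝓝 α] fun x => x - α := by
  simpa using isLittleO_pow_sub_sub α one_lt_two

section Steffensen

variable {f : ℝ → ℝ} {α a : ℝ}

theorem isBigO_sub_mul_sub_sq (hroot : f α = 0)
    (hlin : (fun p : ℝ × ℝ => f p.2 - f p.1 - a * (p.2 - p.1)) =O[𝓝 (α, α)]
      fun p => ‖p - (α, α)‖ * ‖p.2 - p.1‖) :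
    (fun x => f x - a * (x - α)) =O[𝓝 α] fun x => (x - α) ^ 2 := by
  have := hlin.comp_tendsto ((tendsto_const_nhds (x := α)).prodMk_nhds tendsto_id)
  refine (this.trans (isBigO_of_le _ fun x => ?_)).congr_left fun x => by simp [hroot]
  simp [Prod.norm_def, sq]

theorem isBigO_sub_of_isBigO_sub_mul_sub_sq
    (hs : (fun x => f x - a * (x - α)) =O[𝓝 α] fun x => (x - α) ^ 2) :
    f =O[𝓝 α] fun x => x - α :=
  ((hs.trans (isLittleO_sub_sq α).isBigO).add
    (isBigO_const_mul_self a _ _)).congr_left fun x => by ring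

theorem isBigO_image_add_self_sub_sub_mul (hroot : f α = 0)
    (hlin : (fun p : ℝ × ℝ => f p.2 - f p.1 - a * (p.2 - p.1)) =O[𝓝 (α, α)]
      fun p => ‖p - (α, α)‖ * ‖p.2 - p.1‖) :
    (fun x => f (x + f x) - f x - a * f x) =O[𝓝 α] fun x => (x - α) ^ 2 := by
  have hf := isBigO_sub_of_isBigO_sub_mul_sub_sq (isBigO_sub_mul_sub_sq hroot hlin)
  have hy : Tendsto (fun x => (x, x + f x)) (𝓝 α) (𝓝 (α, α)) := by
    have hf0 := hf.trans_tendsto (tendsto_sub_nhds_zero_iff.2 tendsto_id)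
    simpa using tendsto_id.prodMk_nhds (tendsto_id.add hf0)
  have hpt : (fun x => (x, x + f x) - (α, α)) =O[𝓝 α] fun x => x - α :=
    ((isBigO_refl _ _).prod_left ((isBigO_refl _ _).add hf)).congr_left fun x => by
      simp only [Prod.mk_sub_mk]; ring_nf
  have := hlin.comp_tendsto hy
  simp only [Function.comp_def, add_sub_cancel_left] at this
  exact (this.trans (hpt.norm_left.mul hf.norm_left)).congr_right fun x => by ring

theorem steffensenStep_sub_isBigO (ha : a ≠ 0) (hroot : f α = 0)
    (hlin : (fun p : ℝ × ℝ => f p.2 - f p.1 - a * (p.2 - p.1)) =O[𝓝 (α, α)]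
      fun p => ‖p - (α, α)‖ * ‖p.2 - p.1‖) :
    (fun x => steffensenStep f x - α) =O[𝓝 α] fun x => (x - α) ^ 2 := by
  have hsq := isLittleO_sub_sq α
  have hs := isBigO_sub_mul_sub_sq hroot hlin
  have hf := isBigO_sub_of_isBigO_sub_mul_sub_sq hs
  have hs₂ := isBigO_image_add_self_sub_sub_mul hroot hlin
  have hD : (fun x => x - α) =O[𝓝 α] fun x => f (x + f x) - f x := by
    have hr : (fun x => a * (f x - a * (x - α)) + (f (x + f x) - f x - a * f x)) =o[𝓝 α]
        fun x => a ^ 2 * (x - α) :=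
      ((hs.const_mul_left a).add hs₂).trans_isLittleO
        (hsq.trans_isBigO (isBigO_self_const_mul (pow_ne_zero 2 ha) _ _))
    exact (isBigO_self_const_mul (pow_ne_zero 2 ha) _ _).trans
      (hr.right_isBigO_add.congr_right fun x => by ring)
  have hN : (fun x => (x - α) * (f (x + f x) - f x) - f x ^ 2) =O[𝓝 α]
      fun x => (x - α) ^ 3 :=
    (((isBigO_refl _ _).mul hs₂).sub (hf.mul hs)).congr (fun x => by ring) (fun x => by ring)
  have hDinv := hD.inv_rev (Eventually.of_forall fun x hx => by
    simp [sub_eq_zero.1 hx, hroot])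
  -- `D = 0` only at `x = α`, where both sides vanish despite the junk value of `/ 0`.
  refine (hN.mul hDinv).congr' ?_ (Eventually.of_forall fun x => ?_)
  · filter_upwards [hD.eq_zero_imp] with x hx
    by_cases hD0 : f (x + f x) - f x = 0
    · simp [steffensenStep, hD0, hx hD0]
    · simp only [steffensenStep]
      field_simp
      ring
  · rcases eq_or_ne (x - α) 0 with h | h
    · simp [h]
    · field_simp

end Steffensen

theorem steffensen_quadratic_convergence_general (f : ℝ → ℝ) (α : ℝ)
    (hf : ContDiffAt ℝ 2 f α) (hroot : f α = 0) (hsimple : deriv f α ≠ 0) :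
    ∃ δ > (0 : ℝ), ∃ C > (0 : ℝ), ∀ x₀ : ℝ, |x₀ - α| < δ →
      (∀ n : ℕ,
        |(fun x => x - f x ^ 2 / (f (x + f x) - f x))^[n + 1] x₀ - α| ≤
          C * |(fun x => x - f x ^ 2 / (f (x + f x) - f x))^[n] x₀ - α| ^ 2) ∧
      Tendsto (fun n => (fun x => x - f x ^ 2 / (f (x + f x) - f x))^[n] x₀)
        atTop (nhds α) := by
  have hlin := hf.isBigO_sub_sub_fderiv.congr_left fun p => by
    rw [fderiv_eq_smul_deriv, smul_eq_mul, mul_comm]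
  obtain ⟨C, hC, hbound⟩ := (steffensenStep_sub_isBigO hsimple hroot hlin).exists_pos
  obtain ⟨δ, hδ, hconv⟩ := exists_dist_iterate_le_sq_and_tendsto (g := steffensenStep f) hC.le
    (hbound.bound.mono fun x hx => by simpa [Real.dist_eq] using hx)
  refine ⟨δ, hδ, C, hC, fun x₀ hx₀ => ?_⟩
  have := hconv x₀ (by rwa [Real.dist_eq])
  simp only [Real.dist_eq] at this
  exact this

/-- Quadratic convergence of Steffensen's method near a simple root with `f'(α) ≠ -1`. -/
theorem steffensen_quadratic_convergence (f : ℝ → ℝ) (α : ℝ)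
    (hf : ContDiffAt ℝ 2 f α) (hroot : f α = 0) (hsimple : deriv f α ≠ 0)
    (hne : deriv f α ≠ -1) :
    ∃ δ > (0 : ℝ), ∃ C > (0 : ℝ), ∀ x₀ : ℝ, |x₀ - α| < δ →
      (∀ n : ℕ,
        |(fun x => x - f x ^ 2 / (f (x + f x) - f x))^[n + 1] x₀ - α| ≤
          C * |(fun x => x - f x ^ 2 / (f (x + f x) - f x))^[n] x₀ - α| ^ 2) ∧
      Tendsto (fun n => (fun x => x - f x ^ 2 / (f (x + f x) - f x))^[n] x₀)
        atTop (nhds α) :=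
  steffensen_quadratic_convergence_general f α hf hroot hsimple
end

section
/- Let f be analytic near a simple root α with c_1 = f'(α), c_2 = f''(α)/2, and let w = x + f(x)³. Then the divided difference f[w,x] = (f(w)-f(x))/(w-x) satisfies f[w,x] - f'(x) = O((x-α)³) as x → α; in particular, replacing f'(x) by f[w,x] in a Newton-type step y = x - f(x)/f[w,x] preserves the expansion y - α = (c_2/c_1)(x-α)² + O((x-α)³). -/
/-!
Taylor's theorem with a remainder that is uniform in the base point gives
`f w - f x - f'(x) (w - x) = O((w - x)²)` as `(w, x) → (α, α)`. Since `w - x = f(x)³` and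
`f(x) = O(x - α)`, dividing by `w - x` yields `f[w,x] - f'(x) = O((x - α)³)`.

For the Newton-type step only the expansions `f[w,x] = c₁ + 2c₂e + O(e²)` and
`f(x) = c₁e + c₂e² + O(e³)`, with `e = x - α`, matter: they make
`(e - f(x)/f[w,x] - (c₂/c₁)e²) · f[w,x]` a combination of `O(e³)` terms, and `f[w,x] → c₁ ≠ 0`.
-/

open Asymptotics Filter Set Topology NNReal

section Taylor

variable {E : Type*} [NormedAddCommGroup E] [NormedSpace ℝ E]

theorem Convex.norm_image_sub_sub_deriv_le {f : ℝ → E} {s : Set ℝ} {K : ℝ≥0} (hs : Convex ℝ s)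
    (hf : ∀ x ∈ s, DifferentiableAt ℝ f x) (hf' : LipschitzOnWith K (deriv f) s)
    {x y : ℝ} (hx : x ∈ s) (hy : y ∈ s) :
    ‖f y - f x - (y - x) • deriv f x‖ ≤ K * ‖y - x‖ ^ 2 := by
  have hxy : segment ℝ x y ⊆ s := hs.segment_subset hx hy
  have hmvt := (convex_segment x y).norm_image_sub_le_of_norm_hasDerivWithin_le
    (f := fun t => f t - t • deriv f x) (f' := fun t => deriv f t - deriv f x) (C := K * ‖y - x‖)
    (fun t ht => (((hf t (hxy ht)).hasDerivAt).sub ((hasDerivAt_id t).smul_const _)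
      |>.congr_deriv (by simp)).hasDerivWithinAt)
    (fun t ht => (hf'.norm_sub_le (hxy ht) hx).trans <|
      mul_le_mul_of_nonneg_left (norm_sub_le_of_mem_segment ht) K.2)
    (left_mem_segment ℝ x y) (right_mem_segment ℝ x y)
  calc ‖f y - f x - (y - x) • deriv f x‖
      = ‖f y - y • deriv f x - (f x - x • deriv f x)‖ := by rw [sub_smul]; congr 1; abel
    _ ≤ K * ‖y - x‖ * ‖y - x‖ := hmvt
    _ = K * ‖y - x‖ ^ 2 := by ring

theorem ContDiffAt.isBigO_image_sub_image_sub_deriv {f : ℝ → E} {a : ℝ}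
    (hf : ContDiffAt ℝ 2 f a) :
    (fun p : ℝ × ℝ => f p.1 - f p.2 - (p.1 - p.2) • deriv f p.2) =O[𝓝 (a, a)]
      fun p => (p.1 - p.2) ^ 2 := by
  obtain ⟨K, t, ht, hK⟩ := (hf.derivWithin (m := 1) (by norm_num)).exists_lipschitzOnWith
  have hdiff : ∀ᶠ x in 𝓝 a, DifferentiableAt ℝ f x :=
    (hf.eventually (by simp)).mono fun x hx => hx.differentiableAt (by norm_num)
  obtain ⟨r, hr, hball⟩ := Metric.mem_nhds_iff.1 (inter_mem ht hdiff)
  refine IsBigO.of_bound K ?_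
  filter_upwards [prod_mem_nhds (Metric.ball_mem_nhds a hr) (Metric.ball_mem_nhds a hr)]
    with p ⟨hp₁, hp₂⟩
  simpa [Real.norm_eq_abs, sq_abs] using (convex_ball a r).norm_image_sub_sub_deriv_le
    (fun x hx => (hball hx).2) (hK.mono fun x hx => (hball hx).1) hp₂ hp₁

theorem ContDiffAt.isBigO_inv_smul_sub_sub_deriv {ι : Type*} {f : ℝ → E} {a : ℝ}
    (hf : ContDiffAt ℝ 2 f a) {l : Filter ι} {x h : ι → ℝ} (hx : Tendsto x l (𝓝 a))
    (hh : Tendsto h l (𝓝 0)) (hh₀ : ∀ᶠ t in l, h t ≠ 0) :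
    (fun t => (h t)⁻¹ • (f (x t + h t) - f (x t)) - deriv f (x t)) =O[l] h := by
  have hpair : Tendsto (fun t => (x t + h t, x t)) l (𝓝 (a, a)) := by
    simpa using (hx.add hh).prodMk_nhds hx
  refine ((isBigO_refl (fun t => (h t)⁻¹) l).smul
    (hf.isBigO_image_sub_image_sub_deriv.comp_tendsto hpair)).congr' ?_ ?_
  · filter_upwards [hh₀] with t ht
    simp [smul_sub, smul_smul, ht]
  · filter_upwards [hh₀] with t ht
    simp only [Function.comp_apply, add_sub_cancel_left, smul_eq_mul]
    field_simp

theorem ContDiffAt.isBigO_sub_taylorWithinEval {f : ℝ → E} {a : ℝ} {n : ℕ}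
    (hf : ContDiffAt ℝ (n + 1) f a) :
    (fun x => f x - taylorWithinEval f n univ a x) =O[𝓝 a] fun x => (x - a) ^ (n + 1) := by
  obtain ⟨u, hu, hfu⟩ := hf.contDiffOn le_rfl (by simp)
  obtain ⟨r, hr, hball⟩ := Metric.mem_nhds_iff.1 hu
  have hlocal : ∀ m x, taylorWithinEval f m (Metric.ball a r) a x = taylorWithinEval f m univ a x :=
    fun m x => by
      simp only [taylor_within_apply, iteratedDerivWithin_univ,
        iteratedDerivWithin_of_isOpen Metric.isOpen_ball (Metric.mem_ball_self hr)]
  have hlittle := taylor_isLittleO (n := n + 1) (convex_ball a r) (Metric.mem_ball_self hr)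
    (by exact_mod_cast hfu.mono hball)
  rw [nhdsWithin_eq_nhds.2 (Metric.ball_mem_nhds a hr)] at hlittle
  simp only [hlocal, taylorWithinEval_succ] at hlittle
  have hnext : (fun x => (((n + 1 : ℝ) * n.factorial)⁻¹ * (x - a) ^ (n + 1)) •
      iteratedDerivWithin (n + 1) f univ a) =O[𝓝 a] fun x => (x - a) ^ (n + 1) := by
    simpa using ((isBigO_refl (fun x => (x - a) ^ (n + 1)) (𝓝 a)).const_mul_left _).smul
      (isBigO_const_const (iteratedDerivWithin (n + 1) f univ a) (one_ne_zero (α := ℝ)) (𝓝 a))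
  exact (hlittle.isBigO.add hnext).congr_left fun x => by abel

theorem ContDiffAt.isBigO_sub_taylor_two {f : ℝ → E} {a : ℝ} (hf : ContDiffAt ℝ 3 f a) :
    (fun x => f x - (f a + (x - a) • deriv f a + ((x - a) ^ 2 / 2) • iteratedDeriv 2 f a))
      =O[𝓝 a] fun x => (x - a) ^ 3 := by
  simpa [taylor_within_apply, div_eq_inv_mul, one_add_one_eq_two] using
    hf.isBigO_sub_taylorWithinEval (n := 2)

theorem ContDiffAt.isBigO_deriv_sub_taylor_one {f : ℝ → E} {a : ℝ} (hf : ContDiffAt ℝ 3 f a) :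
    (fun x => deriv f x - (deriv f a + (x - a) • iteratedDeriv 2 f a))
      =O[𝓝 a] fun x => (x - a) ^ 2 := by
  simpa [taylor_within_apply, iteratedDeriv_succ'] using
    (hf.derivWithin (m := 2) (by norm_num)).isBigO_sub_taylorWithinEval (n := 1)

end Taylor

theorem isBigO_newton_step_error {ι 𝕜 : Type*} [NormedField 𝕜] {l : Filter ι} {e F D : ι → 𝕜}
    {c₁ c₂ : 𝕜} (hc₁ : c₁ ≠ 0) (he : Tendsto e l (𝓝 0))
    (hF : (fun x => F x - (c₁ * e x + c₂ * e x ^ 2)) =O[l] fun x => e x ^ 3)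
    (hD : (fun x => D x - (c₁ + 2 * c₂ * e x)) =O[l] fun x => e x ^ 2) :
    (fun x => e x - F x / D x - c₂ / c₁ * e x ^ 2) =O[l] fun x => e x ^ 3 := by
  have he_one : e =O[l] fun _ => (1 : 𝕜) := he.isBigO_one 𝕜
  have hsq : (fun x => e x ^ 2) =O[l] e := by
    simpa [sq] using (isBigO_refl e l).mul he_one
  have hD_tendsto : Tendsto D l (𝓝 c₁) := by
    have hR : Tendsto (fun x => D x - (c₁ + 2 * c₂ * e x)) l (𝓝 0) :=
      hD.trans_tendsto (by simpa using he.pow 2)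
    simpa using hR.add ((he.const_mul (2 * c₂)).const_add c₁)
  have hD_inv : (fun x => (D x)⁻¹) =O[l] fun _ => (1 : 𝕜) := (hD_tendsto.inv₀ hc₁).isBigO_one 𝕜
  have hN : (fun x => e x * D x - F x - c₂ / c₁ * e x ^ 2 * D x) =O[l] fun x => e x ^ 3 := by
    have h₁ : (fun x => e x * (D x - (c₁ + 2 * c₂ * e x))) =O[l] fun x => e x ^ 3 := by
      simpa [pow_succ'] using (isBigO_refl e l).mul hD
    have h₂ : (fun x => e x ^ 2 * (2 * c₂ * e x + (D x - (c₁ + 2 * c₂ * e x)))) =O[l]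
        fun x => e x ^ 3 :=
      ((isBigO_refl (fun x => e x ^ 2) l).mul
        (((isBigO_refl e l).const_mul_left (2 * c₂)).add (hD.trans hsq))).congr_right
        fun x => by ring
    refine ((h₁.sub hF).sub (h₂.const_mul_left (c₂ / c₁))).congr_left fun x => ?_
    field_simp
    ring
  refine (hN.mul hD_inv).congr' ?_ (Eventually.of_forall fun x => mul_one _)
  filter_upwards [hD_tendsto.eventually_ne hc₁] with x hx
  field_simp

theorem ContDiffAt.isBigO_cubic_divided_difference_sub_deriv {f : ℝ → ℝ} {a : ℝ}
    (hf : ContDiffAt ℝ 2 f a) (hroot : f a = 0) (hsimple : deriv f a ≠ 0) :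
    (fun x => (f (x + f x ^ 3) - f x) / f x ^ 3 - deriv f x) =O[𝓝[≠] a]
      fun x => (x - a) ^ 3 := by
  have hdf : HasDerivAt f (deriv f a) a := (hf.differentiableAt (by norm_num)).hasDerivAt
  have hcube : (fun x => f x ^ 3) =O[𝓝[≠] a] fun x => (x - a) ^ 3 := by
    have hlin := hdf.differentiableAt.isBigO_sub
    simp only [hroot, sub_zero] at hlin
    exact (hlin.pow 3).mono nhdsWithin_le_nhds
  have hcube_tendsto : Tendsto (fun x => f x ^ 3) (𝓝[≠] a) (𝓝 0) := by
    simpa [hroot] using (hdf.continuousAt.tendsto.mono_left nhdsWithin_le_nhds).pow 3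
  have hcube_ne : ∀ᶠ x in 𝓝[≠] a, f x ^ 3 ≠ 0 :=
    (hdf.eventually_ne hsimple).mono fun x hx => pow_ne_zero 3 hx
  exact ((hf.isBigO_inv_smul_sub_sub_deriv (tendsto_id.mono_left nhdsWithin_le_nhds)
    hcube_tendsto hcube_ne).trans hcube).congr_left fun x => by simp [div_eq_inv_mul]

/-- With `w = x + f(x)³`, the divided difference `f[w,x]` approximates `f'(x)` to third
order in `x - α`, and the derivative-free Newton-type step `y = x - f x / f[w,x]`
retains the expansion `y - α = (c₂/c₁)(x - α)² + O((x - α)³)`. -/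
theorem cubic_perturbation_divided_difference (f : ℝ → ℝ) (α : ℝ)
    (hf : AnalyticAt ℝ f α) (hroot : f α = 0) (hsimple : deriv f α ≠ 0) :
    ((fun x => (f (x + f x ^ 3) - f x) / (f x ^ 3) - deriv f x)
        =O[nhdsWithin α {α}ᶜ] fun x => (x - α) ^ 3) ∧
      ((fun x => (x - f x / ((f (x + f x ^ 3) - f x) / (f x ^ 3))) - α -
          (iteratedDeriv 2 f α / 2 / deriv f α) * (x - α) ^ 2)
        =O[nhdsWithin α {α}ᶜ] fun x => (x - α) ^ 3) := by
  have hf₃ : ContDiffAt ℝ 3 f α := hf.contDiffAt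
  have hdivided := (hf₃.of_le (by norm_num)).isBigO_cubic_divided_difference_sub_deriv hroot hsimple
  refine ⟨hdivided, ?_⟩
  have he : Tendsto (fun x => x - α) (𝓝[≠] α) (𝓝 0) :=
    tendsto_sub_nhds_zero_iff.2 nhdsWithin_le_nhds
  have hF : (fun x => f x - (deriv f α * (x - α) + iteratedDeriv 2 f α / 2 * (x - α) ^ 2))
      =O[𝓝[≠] α] fun x => (x - α) ^ 3 :=
    (hf₃.isBigO_sub_taylor_two.mono nhdsWithin_le_nhds).congr_left fun x => by
      rw [hroot, smul_eq_mul, smul_eq_mul]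
      ring
  have hderiv : (fun x => deriv f x - (deriv f α + iteratedDeriv 2 f α * (x - α)))
      =O[𝓝[≠] α] fun x => (x - α) ^ 2 :=
    (hf₃.isBigO_deriv_sub_taylor_one.mono nhdsWithin_le_nhds).congr_left fun x => by
      rw [smul_eq_mul, mul_comm]
  have hcube_sq : (fun x => (x - α) ^ 3) =O[𝓝[≠] α] fun x => (x - α) ^ 2 :=
    ((isBigO_refl (fun x => (x - α) ^ 2) _).mul (he.isBigO_one ℝ)).congr (fun x => by ring)
      fun x => by ring
  exact (isBigO_newton_step_error (D := fun x => (f (x + f x ^ 3) - f x) / f x ^ 3) hsimple he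
    hF (((hdivided.trans hcube_sq).add hderiv).congr_left fun x => by ring)).congr_left
    fun x => by ring
end

section
/- Let A : ℝ → ℝ be three times differentiable at 0 with A(0) = 1, A'(0) = 0, A''(0) = 0. Let f be analytic near a simple root α, and define y = x - A(f(x)/f'(x)) · f(x)/f'(x). Then y - α = (c_2/c_1)(x-α)² + O((x-α)³), i.e., the weighted Newton step has the same second-order error constant c_2/c_1 as the unweighted Newton step. -/
/-!
Write `t = f / f'` for the Newton correction. The quadratic Taylor expansions of `f` and `f'`
at the simple root give the classical Newton error `x - t - α = (c₂/c₁)(x - α)² + O((x - α)³)`.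
The weighted step differs from the Newton step by `(A t - 1) t`, and `A t - 1 = O(t²)` because
`A 0 = 1`, `A' 0 = 0`, while `t = O(x - α)`; so the weight only enters at third order.
-/

open Asymptotics Filter Metric Topology Nat

theorem ContDiffAt.isLittleO_sub_taylor {E : Type*} [NormedAddCommGroup E] [NormedSpace ℝ E]
    {f : ℝ → E} {x₀ : ℝ} {n : ℕ} (hf : ContDiffAt ℝ n f x₀) :
    (fun x => f x - ∑ k ∈ Finset.range (n + 1), ((k ! : ℝ)⁻¹ * (x - x₀) ^ k) • iteratedDeriv k f x₀)
      =o[𝓝 x₀] fun x => (x - x₀) ^ n := by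
  obtain ⟨u, hu, hfu⟩ := hf.contDiffOn le_rfl (by simp)
  obtain ⟨ε, hε, hball⟩ := Metric.mem_nhds_iff.1 hu
  have hx₀ : x₀ ∈ ball x₀ ε := mem_ball_self hε
  have htaylor := taylor_isLittleO (convex_ball x₀ ε) hx₀ (hfu.mono hball)
  rw [isOpen_ball.nhdsWithin_eq hx₀] at htaylor
  convert htaylor using 3 with x
  rw [taylor_within_apply]
  refine Finset.sum_congr rfl fun k _ => ?_
  rw [iteratedDerivWithin_of_isOpen isOpen_ball hx₀]

theorem ContDiffAt.isBigO_sub_taylor {E : Type*} [NormedAddCommGroup E] [NormedSpace ℝ E]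
    {f : ℝ → E} {x₀ : ℝ} {n : ℕ} (hf : ContDiffAt ℝ (n + 1) f x₀) :
    (fun x => f x - ∑ k ∈ Finset.range (n + 1), ((k ! : ℝ)⁻¹ * (x - x₀) ^ k) • iteratedDeriv k f x₀)
      =O[𝓝 x₀] fun x => (x - x₀) ^ (n + 1) := by
  have hlittle := (ContDiffAt.isLittleO_sub_taylor (n := n + 1) (by exact_mod_cast hf)).isBigO
  have hlast : (fun x => (((n + 1) ! : ℝ)⁻¹ * (x - x₀) ^ (n + 1)) • iteratedDeriv (n + 1) f x₀)
      =O[𝓝 x₀] fun x => (x - x₀) ^ (n + 1) :=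
    .of_bound (‖((n + 1) ! : ℝ)⁻¹‖ * ‖iteratedDeriv (n + 1) f x₀‖) <| .of_forall fun x => by
      rw [norm_smul, norm_mul]
      exact le_of_eq (by ring)
  refine (hlittle.add hlast).congr_left fun x => ?_
  rw [Finset.sum_range_succ]
  abel

theorem ContDiffAt.isBigO_sub_sq_of_deriv_eq_zero {g : ℝ → ℝ} {x₀ : ℝ}
    (hg : ContDiffAt ℝ 2 g x₀) (hg' : deriv g x₀ = 0) :
    (fun x => g x - g x₀) =O[𝓝 x₀] fun x => (x - x₀) ^ 2 := by
  simpa [Finset.sum_range_succ, hg'] using hg.isBigO_sub_taylor (n := 1)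

section NewtonStep

variable {f : ℝ → ℝ} {α : ℝ}

theorem isBigO_div_deriv_of_root (hf : DifferentiableAt ℝ f α) (hdf : ContinuousAt (deriv f) α)
    (hroot : f α = 0) (hsimple : deriv f α ≠ 0) :
    (fun x => f x / deriv f x) =O[𝓝 α] fun x => x - α := by
  have hinv : (fun x => (deriv f x)⁻¹) =O[𝓝 α] fun _ => (1 : ℝ) :=
    (hdf.tendsto.inv₀ hsimple).isBigO_one ℝ
  simpa [hroot, div_eq_mul_inv] using hf.hasDerivAt.isBigO_sub.mul hinv

theorem newton_step_sub_root_isBigO (hf : ContDiffAt ℝ 3 f α) (hroot : f α = 0)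
    (hsimple : deriv f α ≠ 0) :
    (fun x => x - f x / deriv f x - α - iteratedDeriv 2 f α / 2 / deriv f α * (x - α) ^ 2)
      =O[𝓝 α] fun x => (x - α) ^ 3 := by
  set c₁ := deriv f α
  set c₂ := iteratedDeriv 2 f α / 2
  have hdf : ContDiffAt ℝ 2 (deriv f) α := hf.derivWithin (by norm_num)
  have hf_taylor : (fun x => f x - c₁ * (x - α) - c₂ * (x - α) ^ 2)
      =O[𝓝 α] fun x => (x - α) ^ 3 := by
    refine (hf.isBigO_sub_taylor (n := 2)).congr_left fun x => ?_
    simp only [Finset.sum_range_succ, Finset.range_one, Finset.sum_singleton, factorial,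
      iteratedDeriv_zero, iteratedDeriv_one, hroot, smul_eq_mul, c₁, c₂]
    ring
  have hdf_taylor : (fun x => deriv f x - c₁ - 2 * c₂ * (x - α))
      =O[𝓝 α] fun x => (x - α) ^ 2 := by
    refine (hdf.isBigO_sub_taylor (n := 1)).congr_left fun x => ?_
    simp only [Finset.sum_range_succ, Finset.range_one, Finset.sum_singleton, factorial,
      iteratedDeriv_zero, iteratedDeriv_succ', smul_eq_mul, c₁, c₂]
    ring
  have hdf_sub : (fun x => deriv f x - c₁) =O[𝓝 α] fun x => x - α :=
    (hdf.differentiableAt (by norm_num)).hasDerivAt.isBigO_sub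
  -- The error times `f' x`, regrouped into Taylor remainders using `c₂ / c₁ * c₁ = c₂`.
  have hnum : (fun x => (x - α) * (deriv f x - c₁ - 2 * c₂ * (x - α))
      - (f x - c₁ * (x - α) - c₂ * (x - α) ^ 2) - c₂ / c₁ * ((x - α) ^ 2 * (deriv f x - c₁)))
      =O[𝓝 α] fun x => (x - α) ^ 3 := by
    exact ((((isBigO_refl _ _).mul hdf_taylor).congr_right fun x => (pow_succ' _ 2).symm).sub
      hf_taylor).sub ((((isBigO_refl _ _).mul hdf_sub).const_mul_left _).congr_right
      fun x => (pow_succ _ 2).symm)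
  have hinv : (fun x => (deriv f x)⁻¹) =O[𝓝 α] fun _ => (1 : ℝ) :=
    (hdf.continuousAt.tendsto.inv₀ hsimple).isBigO_one ℝ
  refine (hnum.mul hinv).congr' ?_ (by simp)
  filter_upwards [hdf.continuousAt.eventually_ne hsimple] with x hx
  field_simp
  ring

end NewtonStep

theorem weighted_newton_step_expansion_general (f A : ℝ → ℝ) (α : ℝ)
    (hf : AnalyticAt ℝ f α) (hroot : f α = 0) (hsimple : deriv f α ≠ 0)
    (hA : ContDiffAt ℝ 3 A 0) (hA0 : A 0 = 1) (hA1 : deriv A 0 = 0) :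
    (fun x => (x - A (f x / deriv f x) * (f x / deriv f x)) - α -
        (iteratedDeriv 2 f α / 2 / deriv f α) * (x - α) ^ 2)
      =O[nhdsWithin α {α}ᶜ] fun x => (x - α) ^ 3 := by
  have hfC : ContDiffAt ℝ 3 f α := hf.contDiffAt
  have ht : (fun x => f x / deriv f x) =O[𝓝 α] fun x => x - α :=
    isBigO_div_deriv_of_root hf.differentiableAt hf.deriv.continuousAt hroot hsimple
  have ht0 : Tendsto (fun x => f x / deriv f x) (𝓝 α) (𝓝 0) :=
    ht.trans_tendsto (tendsto_sub_nhds_zero_iff.2 tendsto_id)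
  have hA_sq : (fun s => A s - 1) =O[𝓝 0] fun s => s ^ 2 := by
    simpa [hA0] using (hA.of_le (by norm_num)).isBigO_sub_sq_of_deriv_eq_zero hA1
  have hweight : (fun x => (A (f x / deriv f x) - 1) * (f x / deriv f x))
      =O[𝓝 α] fun x => (x - α) ^ 3 :=
    ((hA_sq.mul (isBigO_refl (fun s => s) _)).comp_tendsto ht0 |>.trans
      ((ht.pow 2).mul ht)).congr_right fun x => (pow_succ _ 2).symm
  have hstep := (newton_step_sub_root_isBigO hfC hroot hsimple).sub hweight
  exact (hstep.congr_left fun x => by ring).mono nhdsWithin_le_nhds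

/-- A weighted Newton step `y = x - A(f x / f' x) · f x / f' x` with `A(0) = 1`,
`A'(0) = 0`, `A''(0) = 0` has the same second-order error constant `c₂/c₁` as the
unweighted Newton step. -/
theorem weighted_newton_step_expansion (f A : ℝ → ℝ) (α : ℝ)
    (hf : AnalyticAt ℝ f α) (hroot : f α = 0) (hsimple : deriv f α ≠ 0)
    (hA : ContDiffAt ℝ 3 A 0) (hA0 : A 0 = 1) (hA1 : deriv A 0 = 0)
    (hA2 : iteratedDeriv 2 A 0 = 0) :
    (fun x => (x - A (f x / deriv f x) * (f x / deriv f x)) - α -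
        (iteratedDeriv 2 f α / 2 / deriv f α) * (x - α) ^ 2)
      =O[nhdsWithin α {α}ᶜ] fun x => (x - α) ^ 3 :=
  weighted_newton_step_expansion_general f A α hf hroot hsimple hA hA0 hA1
end

section
/- Let f be analytic near a simple root α with c_h = f^{(h)}(α)/h!. Let y = x - f(x)/f'(x), t = f(y)/f(x), and let B be twice differentiable at 0 with B(0) = 1 and B'(0) = 1. Define z = y - B(t) · f(y)/f[x,y]. Then z - α = O((x-α)⁴) as x → α; that is, the two-step method with such a weight function B has local convergence of order at least four. -/
/-!
Write `g = dslope f α`, so that `f x = (x - α) g(x)` and `f' = g + (x - α) g'`. The Newton error is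
then `y - α = (x - α)² g'(x) / f'(x)`, and the divided difference at the Newton point is exactly
`f[x, y] = f'(x) (1 - t)`; hence `z - α = (y - α) (f[x, y] - B(t) g(y)) / f[x, y]`.
Since `t = O(x - α)` and `B(t) = 1 + t + O(t²)`, it remains to see that
`f'(x) (1 - t) - (1 + t) g(y) = O((x - α)²)`. Multiplied by `f'(x) g(x)`, this quantity is
`(x - α) Q(x) - (g(y) - g(α)) K(x)` with `K` bounded and `Q` analytic. Both terms are
`O((x - α)²)`: `g(y) - g(α) = O(y - α)`, and `Q(α) = 0` because `g'(α) = (dslope g α)(α)`.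
-/

open Asymptotics Filter Topology

theorem ContDiffAt.isBigO_sub_sub_mul_deriv {B : ℝ → ℝ} {a : ℝ} (hB : ContDiffAt ℝ 2 B a) :
    (fun s => B s - B a - (s - a) * deriv B a) =O[𝓝 a] fun s => (s - a) ^ 2 := by
  obtain ⟨δ, hδ, hdiff⟩ : ∃ δ > 0, ∀ s ∈ Metric.ball a δ, DifferentiableAt ℝ B s :=
    Metric.eventually_nhds_iff_ball.mp <|
      (hB.eventually (by simp)).mono fun s hs => hs.differentiableAt two_ne_zero
  set c := deriv (deriv B) a
  have hB' : HasDerivAt (deriv B) c a :=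
    ((hB.derivWithin (m := 1) (by norm_num)).differentiableAt one_ne_zero).hasDerivAt
  have hball : 𝓝[Metric.ball a δ] a = 𝓝 a :=
    Metric.isOpen_ball.nhdsWithin_eq (Metric.mem_ball_self hδ)
  have hrem := (convex_ball a δ).isLittleO_pow_succ_real (Metric.mem_ball_self hδ) (n := 1)
    (f := fun s => B s - (s - a) * deriv B a - (s - a) ^ 2 * c / 2)
    (f' := fun s => deriv B s - deriv B a - (s - a) * c)
    (fun s hs => (((hdiff s hs).hasDerivAt.sub (((hasDerivAt_id s).sub_const a).mul_const _)).sub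
      ((((hasDerivAt_id s).sub_const a).pow 2).mul_const c |>.div_const 2)).hasDerivWithinAt
        |>.congr_deriv (by simp; ring))
    (by simpa [hball] using hasDerivAt_iff_isLittleO.mp hB')
  rw [hball] at hrem
  refine (hrem.isBigO.add (isBigO_const_mul_self (c / 2) _ _)).congr_left fun s => ?_
  simp only [sub_self, zero_mul, sub_zero]
  ring

variable {𝕜 : Type*} [NontriviallyNormedField 𝕜]

theorem DifferentiableAt.isBigO_of_eq_zero {E : Type*} [NormedAddCommGroup E] [NormedSpace 𝕜 E]
    {φ : 𝕜 → E} {a : 𝕜} (hφ : DifferentiableAt 𝕜 φ a) (h0 : φ a = 0) :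
    φ =O[𝓝 a] fun x => x - a := by
  simpa [h0] using hφ.isBigO_sub

theorem AnalyticAt.dslope {E : Type*} [NormedAddCommGroup E] [NormedSpace 𝕜 E] {f : 𝕜 → E}
    {a : 𝕜} (h : AnalyticAt 𝕜 f a) : AnalyticAt 𝕜 (dslope f a) a :=
  let ⟨_, hp⟩ := h
  hp.has_fpower_series_dslope_fslope.analyticAt

noncomputable def newtonStep (f : 𝕜 → 𝕜) (x : 𝕜) : 𝕜 := x - f x / deriv f x

noncomputable def newtonRatio (f : 𝕜 → 𝕜) (x : 𝕜) : 𝕜 := f (newtonStep f x) / f x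

noncomputable def twoStep (f b : 𝕜 → 𝕜) (x : 𝕜) : 𝕜 :=
  newtonStep f x - b (newtonRatio f x) *
    (f (newtonStep f x) / ((f x - f (newtonStep f x)) / (x - newtonStep f x)))

noncomputable def weightDefect (f : 𝕜 → 𝕜) (α : 𝕜) (b : 𝕜 → 𝕜) (x : 𝕜) : 𝕜 :=
  deriv f x * (1 - newtonRatio f x) - b (newtonRatio f x) * dslope f α (newtonStep f x)

section

variable {f : 𝕜 → 𝕜} {α x : 𝕜}

theorem eq_sub_mul_dslope (hroot : f α = 0) (y : 𝕜) : f y = (y - α) * dslope f α y := by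
  simpa [hroot] using (sub_smul_dslope f α y).symm

theorem sub_div_sub_newtonStep (hfx : f x ≠ 0) (hd : deriv f x ≠ 0) :
    (f x - f (newtonStep f x)) / (x - newtonStep f x) = deriv f x * (1 - newtonRatio f x) := by
  simp only [newtonStep, newtonRatio, sub_sub_cancel]
  field_simp

theorem twoStep_sub_eq (hroot : f α = 0) (hfx : f x ≠ 0) (hd : deriv f x ≠ 0)
    (ht : 1 - newtonRatio f x ≠ 0) (b : 𝕜 → 𝕜) :
    twoStep f b x - α =
      (newtonStep f x - α) * weightDefect f α b x * (deriv f x * (1 - newtonRatio f x))⁻¹ := by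
  rw [twoStep, weightDefect, sub_div_sub_newtonStep hfx hd,
    eq_sub_mul_dslope hroot (newtonStep f x)]
  field_simp
  ring

theorem deriv_eq_dslope_add (hroot : f α = 0) (hg : DifferentiableAt 𝕜 (dslope f α) x) :
    deriv f x = dslope f α x + (x - α) * deriv (dslope f α) x := by
  have h : HasDerivAt (fun y => (y - α) * dslope f α y)
      (1 * dslope f α x + (x - α) * deriv (dslope f α) x) x :=
    ((hasDerivAt_id x).sub_const α).mul hg.hasDerivAt
  simpa using (h.congr_of_eventuallyEq (.of_forall (eq_sub_mul_dslope hroot))).deriv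

theorem newtonStep_sub_eq (hroot : f α = 0) (hg : DifferentiableAt 𝕜 (dslope f α) x)
    (hd : deriv f x ≠ 0) :
    newtonStep f x - α = (x - α) ^ 2 * (deriv (dslope f α) x / deriv f x) := by
  have h := deriv_eq_dslope_add hroot hg
  rw [newtonStep, eq_sub_mul_dslope hroot x]
  field_simp
  linear_combination (x - α) * h

theorem newtonRatio_eq (hroot : f α = 0) (hg : DifferentiableAt 𝕜 (dslope f α) x)
    (hd : deriv f x ≠ 0) (hgx : dslope f α x ≠ 0) :
    newtonRatio f x = (x - α) * (deriv (dslope f α) x * dslope f α (newtonStep f x) /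
      (deriv f x * dslope f α x)) := by
  rw [newtonRatio, eq_sub_mul_dslope hroot (newtonStep f x), newtonStep_sub_eq hroot hg hd,
    eq_sub_mul_dslope hroot x]
  rcases eq_or_ne (x - α) 0 with hx | hx
  · simp [hx]
  · field_simp

end

section

variable [CompleteSpace 𝕜] {f : 𝕜 → 𝕜} {α : 𝕜}

theorem newtonStep_sub_isBigO (hf : AnalyticAt 𝕜 f α) (hroot : f α = 0)
    (hsimple : deriv f α ≠ 0) :
    (fun x => newtonStep f x - α) =O[𝓝 α] fun x => (x - α) ^ 2 := by
  have hg := hf.dslope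
  have hquot := hg.deriv.continuousAt.tendsto.div hf.deriv.continuousAt.tendsto hsimple
  refine ((isBigO_refl _ _).mul (hquot.isBigO_one 𝕜)).congr' ?_ (.of_forall fun x => mul_one _)
  filter_upwards [hg.eventually_analyticAt, hf.deriv.continuousAt.eventually_ne hsimple]
    with x hgx hdx
  exact (newtonStep_sub_eq hroot hgx.differentiableAt hdx).symm

theorem tendsto_newtonStep (hf : AnalyticAt 𝕜 f α) (hroot : f α = 0)
    (hsimple : deriv f α ≠ 0) : Tendsto (newtonStep f) (𝓝 α) (𝓝 α) := by
  have hsq : Tendsto (fun x => (x - α) ^ 2) (𝓝 α) (𝓝 0) :=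
    ((continuous_sub_right α).pow 2).tendsto' α 0 (by simp)
  exact tendsto_sub_nhds_zero_iff.mp ((newtonStep_sub_isBigO hf hroot hsimple).trans_tendsto hsq)

theorem tendsto_dslope_newtonStep (hf : AnalyticAt 𝕜 f α) (hroot : f α = 0)
    (hsimple : deriv f α ≠ 0) :
    Tendsto (fun x => dslope f α (newtonStep f x)) (𝓝 α) (𝓝 (deriv f α)) := by
  rw [← dslope_same]
  exact hf.dslope.continuousAt.tendsto.comp (tendsto_newtonStep hf hroot hsimple)

theorem newtonRatio_isBigO (hf : AnalyticAt 𝕜 f α) (hroot : f α = 0)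
    (hsimple : deriv f α ≠ 0) : newtonRatio f =O[𝓝 α] fun x => x - α := by
  have hg := hf.dslope
  have hgα : dslope f α α ≠ 0 := by rwa [dslope_same]
  have hquot :=
    (hg.deriv.continuousAt.tendsto.mul (tendsto_dslope_newtonStep hf hroot hsimple)).div
      (hf.deriv.continuousAt.tendsto.mul hg.continuousAt.tendsto) (mul_ne_zero hsimple hgα)
  refine ((isBigO_refl _ _).mul (hquot.isBigO_one 𝕜)).congr' ?_ (.of_forall fun x => mul_one _)
  filter_upwards [hg.eventually_analyticAt, hf.deriv.continuousAt.eventually_ne hsimple,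
    hg.continuousAt.eventually_ne hgα] with x hgx hdx hgx0
  exact (newtonRatio_eq hroot hgx.differentiableAt hdx hgx0).symm

theorem weightDefect_one_add_isBigO (hf : AnalyticAt 𝕜 f α) (hroot : f α = 0)
    (hsimple : deriv f α ≠ 0) :
    weightDefect f α (fun s => 1 + s) =O[𝓝 α] fun x => (x - α) ^ 2 := by
  have hg := hf.dslope
  have hh := hg.dslope
  have hgα : dslope f α α = deriv f α := dslope_same f α
  have hΦ : ∀ᶠ x in 𝓝 α, weightDefect f α (fun s => 1 + s) x * (deriv f x * dslope f α x) =
      (x - α) * (deriv f x * dslope f α x * (dslope (dslope f α) α x + deriv (dslope f α) x)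
          - deriv f α * deriv (dslope f α) x * (deriv f x + deriv f α))
        - (dslope f α (newtonStep f x) - deriv f α) * (deriv f x * dslope f α x + (x - α) *
            deriv (dslope f α) x * (deriv f x + deriv f α + dslope f α (newtonStep f x))) := by
    filter_upwards [hg.eventually_analyticAt, hf.deriv.continuousAt.eventually_ne hsimple,
      hg.continuousAt.eventually_ne (hgα ▸ hsimple)] with x hgx hdx hgx0
    have hd := deriv_eq_dslope_add hroot hgx.differentiableAt
    have hgh : (x - α) * dslope (dslope f α) α x = dslope f α x - deriv f α := by
      rw [← hgα, ← smul_eq_mul, sub_smul_dslope]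
    rw [weightDefect, newtonRatio_eq hroot hgx.differentiableAt hdx hgx0]
    field_simp
    linear_combination (deriv f x * dslope f α x) * (hd - hgh)
  have hQ : (fun x => deriv f x * dslope f α x * (dslope (dslope f α) α x + deriv (dslope f α) x)
      - deriv f α * deriv (dslope f α) x * (deriv f x + deriv f α)) =O[𝓝 α] fun x => x - α := by
    have := hf.deriv.differentiableAt
    have := hg.differentiableAt
    have := hh.differentiableAt
    have := hg.deriv.differentiableAt
    refine DifferentiableAt.isBigO_of_eq_zero (by fun_prop) ?_
    rw [dslope_same (dslope f α) α, hgα]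
    ring
  have hGc : (fun x => dslope f α (newtonStep f x) - deriv f α) =O[𝓝 α] fun x => (x - α) ^ 2 := by
    rw [← hgα]
    exact (hg.differentiableAt.isBigO_sub.comp_tendsto (tendsto_newtonStep hf hroot hsimple)).trans
      (newtonStep_sub_isBigO hf hroot hsimple)
  have hK := ((hf.deriv.continuousAt.tendsto.mul hg.continuousAt.tendsto).add
    ((((continuous_sub_right α).tendsto α).mul hg.deriv.continuousAt.tendsto).mul
      ((hf.deriv.continuousAt.tendsto.add (tendsto_const_nhds (x := deriv f α))).add
        (tendsto_dslope_newtonStep hf hroot hsimple)))).isBigO_one 𝕜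
  have hdg : deriv f α * dslope f α α ≠ 0 := by rw [hgα]; exact mul_ne_zero hsimple hsimple
  have hinv := ((hf.deriv.continuousAt.tendsto.mul hg.continuousAt.tendsto).inv₀ hdg).isBigO_one 𝕜
  have hnum := (((isBigO_refl _ _).mul hQ).congr_right fun x => (sq (x - α)).symm).sub
    ((hGc.mul hK).congr_right fun x => mul_one _)
  refine (hnum.mul hinv).congr' ?_ (.of_forall fun x => mul_one _)
  filter_upwards [hΦ, (hf.deriv.continuousAt.mul hg.continuousAt).eventually_ne hdg] with x hx hx0
  rw [← hx]
  exact mul_inv_cancel_right₀ hx0 _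

theorem tendsto_deriv_mul_one_sub_newtonRatio (hf : AnalyticAt 𝕜 f α) (hroot : f α = 0)
    (hsimple : deriv f α ≠ 0) :
    Tendsto (fun x => deriv f x * (1 - newtonRatio f x)) (𝓝 α) (𝓝 (deriv f α)) := by
  have ht0 := (newtonRatio_isBigO hf hroot hsimple).trans_tendsto
    (tendsto_sub_nhds_zero_iff.mpr tendsto_id)
  simpa using hf.deriv.continuousAt.tendsto.mul (tendsto_const_nhds (x := (1:𝕜)).sub ht0)

theorem twoStep_sub_eventuallyEq (hf : AnalyticAt 𝕜 f α) (hroot : f α = 0)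
    (hsimple : deriv f α ≠ 0) (b : 𝕜 → 𝕜) :
    (fun x => twoStep f b x - α) =ᶠ[𝓝[≠] α] fun x =>
      (newtonStep f x - α) * weightDefect f α b x * (deriv f x * (1 - newtonRatio f x))⁻¹ := by
  have hgα : dslope f α α ≠ 0 := by rwa [dslope_same]
  have hden := (tendsto_deriv_mul_one_sub_newtonRatio hf hroot hsimple).eventually_ne hsimple
  filter_upwards [self_mem_nhdsWithin,
    nhdsWithin_le_nhds (hf.dslope.continuousAt.eventually_ne hgα),
    nhdsWithin_le_nhds (hf.deriv.continuousAt.eventually_ne hsimple), nhdsWithin_le_nhds hden]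
    with x hx hgx hdx hdenx
  refine twoStep_sub_eq hroot ?_ hdx (right_ne_zero_of_mul hdenx) b
  rw [eq_sub_mul_dslope hroot x]
  exact mul_ne_zero (sub_ne_zero.mpr hx) hgx

end

theorem weightDefect_isBigO {f B : ℝ → ℝ} {α : ℝ} (hf : AnalyticAt ℝ f α) (hroot : f α = 0)
    (hsimple : deriv f α ≠ 0) (hB : ContDiffAt ℝ 2 B 0) (hB0 : B 0 = 1) (hB1 : deriv B 0 = 1) :
    weightDefect f α B =O[𝓝 α] fun x => (x - α) ^ 2 := by
  have ht := newtonRatio_isBigO hf hroot hsimple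
  have ht0 := ht.trans_tendsto (tendsto_sub_nhds_zero_iff.mpr tendsto_id)
  have hrem : (fun x => B (newtonRatio f x) - 1 - newtonRatio f x) =O[𝓝 α]
      fun x => (x - α) ^ 2 := by
    have := (hB.isBigO_sub_sub_mul_deriv.comp_tendsto ht0).trans
      ((ht.pow 2).congr_left fun x => by simp)
    exact this.congr_left fun x => by simp [hB0, hB1]
  have hG := (tendsto_dslope_newtonStep hf hroot hsimple).isBigO_one ℝ
  refine ((weightDefect_one_add_isBigO hf hroot hsimple).sub
    ((hrem.mul hG).congr_right fun _ => mul_one _)).congr_left fun x => ?_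
  simp only [weightDefect]
  ring

/-- The two-step method `z = y - B(t)·f(y)/f[x,y]`, `y = x - f x / f' x`,
`t = f(y)/f(x)`, with `B(0) = 1`, `B'(0) = 1`, has local order at least four. -/
theorem two_step_fourth_order (f B : ℝ → ℝ) (α : ℝ)
    (hf : AnalyticAt ℝ f α) (hroot : f α = 0) (hsimple : deriv f α ≠ 0)
    (hB : ContDiffAt ℝ 2 B 0) (hB0 : B 0 = 1) (hB1 : deriv B 0 = 1) :
    (fun x =>
        (fun y => y - B (f y / f x) * (f y / ((f x - f y) / (x - y))))
          (x - f x / deriv f x) - α)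
      =O[nhdsWithin α {α}ᶜ] fun x => (x - α) ^ 4 := by
  have hbound := ((newtonStep_sub_isBigO hf hroot hsimple).mul
    (weightDefect_isBigO hf hroot hsimple hB hB0 hB1)).mul
      (((tendsto_deriv_mul_one_sub_newtonRatio hf hroot hsimple).inv₀ hsimple).isBigO_one ℝ)
  exact (hbound.mono nhdsWithin_le_nhds).congr' (twoStep_sub_eventuallyEq hf hroot hsimple B).symm
    (.of_forall fun x => by ring)
end
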